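/- A delta-matroid M = (E, B) is even if and only if for all bases B1, B2 ∈ B and every element e ∈ B1 △ B2, there exists f ∈ (B1 △ B2) \ {e} such that B1 △ {e, f} ∈ B. -/

import Mathlib

/-! Replacing a base `B₁` by `B₁ ∆ {e, f}` preserves the parity of its size exactly when
`e ≠ f`, since `#(A ∆ B) ≡ #A + #B (mod 2)`. So in an even delta-matroid the exchange element
`f` can never be `e`. Conversely, exchanges with `f ≠ e` shrink `B₁ ∆ B₂` by two while keeping
the parity of `#B₁`, and iterating them walks from `B₁` to `B₂`. -/

open scoped symmDiff

/-- A delta-matroid: a finite ground set `E` and a nonempty family `B` of subsets of `E`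
satisfying the symmetric exchange axiom. -/
structure DeltaMatroid (α : Type*) [DecidableEq α] where
  E : Finset α
  B : Finset (Finset α)
  nonempty : B.Nonempty
  subset_ground : ∀ S ∈ B, S ⊆ E
  exchange : ∀ B₁ ∈ B, ∀ B₂ ∈ B, ∀ e ∈ B₁ ∆ B₂,
    ∃ f ∈ B₁ ∆ B₂, B₁ ∆ ({e, f} : Finset α) ∈ B

variable {α : Type*} [DecidableEq α]

/-- A delta-matroid is even if all bases have cardinalities of the same parity. -/
def DeltaMatroid.IsEven (M : DeltaMatroid α) : Prop :=
  ∀ B₁ ∈ M.B, ∀ B₂ ∈ M.B, B₁.card % 2 = B₂.card % 2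

/-- `X` is a separator of `M` if `M` is the direct sum of its restrictions to `X`
and to `E \ X`; equivalently, bases can be freely recombined across `X`. -/
def DeltaMatroid.IsSeparator (M : DeltaMatroid α) (X : Finset α) : Prop :=
  X ⊆ M.E ∧ ∀ B₁ ∈ M.B, ∀ B₂ ∈ M.B, (B₁ ∩ X) ∪ (B₂ \ X) ∈ M.B

/-- A component is a minimal nonempty separator. -/
def DeltaMatroid.IsComponent (M : DeltaMatroid α) (C : Finset α) : Prop :=
  M.IsSeparator C ∧ C.Nonempty ∧
    ∀ X, M.IsSeparator X → X.Nonempty → X ⊆ C → X = C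

/-- The basis graph of a delta-matroid: vertices are the bases, two bases being
adjacent iff their symmetric difference has exactly two elements. -/
def DeltaMatroid.BG (M : DeltaMatroid α) : SimpleGraph ↥M.B where
  Adj S T := ((S : Finset α) ∆ (T : Finset α)).card = 2
  symm := by
    refine ⟨?_⟩
    intro S T h
    rwa [symmDiff_comm]
  loopless := by
    refine ⟨?_⟩
    intro S h
    simp [symmDiff_self] at h

/-- The graph `G` has a cycle of length `k` through the edge `e`. -/
def CycleThroughEdge {V : Type*} (G : SimpleGraph V) (e : Sym2 V) (k : ℕ) : Prop :=
  ∃ (v : V) (c : G.Walk v v), c.IsCycle ∧ c.length = k ∧ e ∈ c.edges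

/-- An edge is pancyclic if it lies in a cycle of every length `3 ≤ k ≤ n`. -/
def EdgePancyclic {V : Type*} [Fintype V] (G : SimpleGraph V) (e : Sym2 V) : Prop :=
  ∀ k, 3 ≤ k → k ≤ Fintype.card V → CycleThroughEdge G e k

/-- An edge is almost pancyclic if it lies in a cycle of every length `4 ≤ k ≤ n`. -/
def EdgeAlmostPancyclic {V : Type*} [Fintype V] (G : SimpleGraph V) (e : Sym2 V) : Prop :=
  ∀ k, 4 ≤ k → k ≤ Fintype.card V → CycleThroughEdge G e k

/-- An edge is even pancyclic if it lies in a cycle of length `k` for every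
`3 ≤ k ≤ n` with `k` even or `k = n`. -/
def EdgeEvenPancyclic {V : Type*} [Fintype V] (G : SimpleGraph V) (e : Sym2 V) : Prop :=
  ∀ k, 3 ≤ k → k ≤ Fintype.card V → (Even k ∨ k = Fintype.card V) →
    CycleThroughEdge G e k

/-- The hypercube graph `Q_d`: vertices `{0,1}^d`, adjacent iff they differ in
exactly one coordinate. -/
def hypercube (d : ℕ) : SimpleGraph (Fin d → Bool) where
  Adj x y := ∃ i, x i ≠ y i ∧ ∀ j, j ≠ i → x j = y j
  symm := by
    refine ⟨?_⟩
    rintro x y ⟨i, h, hj⟩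
    exact ⟨i, h.symm, fun j hne => (hj j hne).symm⟩
  loopless := by
    refine ⟨?_⟩
    rintro x ⟨i, h, -⟩
    exact h rfl

namespace Finset

theorem card_symmDiff_add_two_mul_card_inter (A B : Finset α) :
    #(A ∆ B) + 2 * #(A ∩ B) = #A + #B := by
  have hsub : A ∩ B ⊆ A ∪ B := inter_subset_left.trans subset_union_left
  have hcard : #(A ∆ B) = #(A ∪ B) - #(A ∩ B) := by
    rw [symmDiff_eq_sup_sdiff_inf, sup_eq_union, inf_eq_inter, card_sdiff_of_subset hsub]
  have := card_union_add_card_inter A B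
  have := card_le_card hsub
  omega

theorem card_symmDiff_mod_two (A B : Finset α) : #(A ∆ B) % 2 = (#A + #B) % 2 := by
  rw [← card_symmDiff_add_two_mul_card_inter]
  omega

theorem card_symmDiff_pair_mod_two (A : Finset α) {e f : α} (hef : e ≠ f) :
    #(A ∆ {e, f}) % 2 = #A % 2 := by
  rw [card_symmDiff_mod_two, card_pair hef]
  omega

theorem card_symmDiff_singleton_mod_two (A : Finset α) (e : α) :
    #(A ∆ {e}) % 2 ≠ #A % 2 := by
  rw [card_symmDiff_mod_two, card_singleton]
  omega

theorem card_symmDiff_pair_symmDiff_add_two {A B : Finset α} {e f : α} (hef : e ≠ f)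
    (he : e ∈ A ∆ B) (hf : f ∈ A ∆ B) :
    #((A ∆ {e, f}) ∆ B) + 2 = #(A ∆ B) := by
  have hsub : {e, f} ⊆ A ∆ B := insert_subset he (singleton_subset_iff.mpr hf)
  rw [symmDiff_right_comm, symmDiff_of_ge hsub, card_sdiff_of_subset hsub, card_pair hef]
  have := card_le_card hsub
  rw [card_pair hef] at this
  omega

end Finset

open Finset

namespace DeltaMatroid

theorem IsEven.symmDiff_singleton_notMem {M : DeltaMatroid α} (hM : M.IsEven) {B : Finset α}
    (hB : B ∈ M.B) (e : α) : B ∆ {e} ∉ M.B := fun hBe =>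
  card_symmDiff_singleton_mod_two B e (hM _ hBe B hB)

theorem isEven_of_exchange_ne {M : DeltaMatroid α}
    (h : ∀ B₁ ∈ M.B, ∀ B₂ ∈ M.B, ∀ e ∈ B₁ ∆ B₂,
      ∃ f ∈ (B₁ ∆ B₂).erase e, B₁ ∆ ({e, f} : Finset α) ∈ M.B) :
    M.IsEven := by
  intro B₁ hB₁ B₂ hB₂
  induction hn : #(B₁ ∆ B₂) using Nat.strong_induction_on generalizing B₁ with
  | _ n ih =>
    obtain hempty | ⟨e, he⟩ := (B₁ ∆ B₂).eq_empty_or_nonempty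
    · rw [symmDiff_eq_empty.mp hempty]
    obtain ⟨f, hf, hB₃⟩ := h B₁ hB₁ B₂ hB₂ e he
    obtain ⟨hfe, hf⟩ := mem_erase.mp hf
    have hcloser := card_symmDiff_pair_symmDiff_add_two (Ne.symm hfe) he hf
    rw [← card_symmDiff_pair_mod_two B₁ (Ne.symm hfe)]
    exact ih _ (by omega) _ hB₃ rfl

end DeltaMatroid

/-- A delta-matroid is even iff for all bases `B₁, B₂` and every `e ∈ B₁ ∆ B₂`
there is `f ∈ (B₁ ∆ B₂) \\ {e}` with `B₁ ∆ {e, f}` a base. -/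
theorem statement1 (M : DeltaMatroid α) :
    M.IsEven ↔
      ∀ B₁ ∈ M.B, ∀ B₂ ∈ M.B, ∀ e ∈ B₁ ∆ B₂,
        ∃ f ∈ (B₁ ∆ B₂).erase e, B₁ ∆ ({e, f} : Finset α) ∈ M.B := by
  refine ⟨fun hM B₁ hB₁ B₂ hB₂ e he => ?_, DeltaMatroid.isEven_of_exchange_ne⟩
  obtain ⟨f, hf, hB₃⟩ := M.exchange B₁ hB₁ B₂ hB₂ e he
  have hfe : f ≠ e := by
    rintro rfl
    exact hM.symmDiff_singleton_notMem hB₁ f (by simpa using hB₃)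
  exact ⟨f, mem_erase.mpr ⟨hfe, hf⟩, hB₃⟩
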